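/- arXiv:2402.02345 — 2 statements merged into one kernel-verified Lean document; each statement's English description precedes it below -/
import Mathlib

section
/- Let d ≥ 1 and let s₁, s₂ be points of the unit sphere 𝕊^d ⊂ ℝ^{d+1}. Then there exists a (d+1)×(d+1) real orthogonal matrix R with determinant 1 such that R s₁ ≠ s_n, R s₂ ≠ s_n (where R acts on ℝ^{d+1} by matrix–vector multiplication and s_n is the north pole), and arccos(⟨s₁, s₂⟩) = ‖h₁(φ(R s₁)) − h₁(φ(R s₂))‖. In particular, the great-circle distance arccos(⟨s₁, s₂⟩) is greater than or equal to the infimum over all orthogonal matrices R (with R s₁ ≠ s_n and R s₂ ≠ s_n) of ‖h₁(φ(R s₁)) − h₁(φ(R s₂))‖. -/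
/-!
Rotate `s₁` to the south pole. There `φ` vanishes, and `h₁ ∘ φ` measures the great-circle
distance from the south pole: `‖h₁ (φ t)‖ = arccos (-t_{d+1})`, so the two sides agree. This
fails only for `s₂ = -s₁`, which would be sent to the north pole; in that case rotate `s₁` onto
the equator instead, where `φ` is odd; as `h₁` is odd too, the right side is
`2 · arccos 0 = π`. A rotation with prescribed image is a hyperplane reflection, followed if
necessary by a second one fixing the target to make the determinant `1`.
-/

open Real
open scoped RealInnerProductSpace

noncomputable section

/-- The first `d` coordinates of a point of `ℝ^{d+1}`, i.e. `s[1:d]`. -/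
def stereoProj {d : ℕ} (s : EuclideanSpace ℝ (Fin (d + 1))) : EuclideanSpace ℝ (Fin d) :=
  WithLp.toLp 2 (fun i => s (Fin.castSucc i))

/-- The stereographic projection `φ(s) = s[1:d] / (1 - s_{d+1})`. -/
def stereo {d : ℕ} (s : EuclideanSpace ℝ (Fin (d + 1))) : EuclideanSpace ℝ (Fin d) :=
  (1 - s (Fin.last d))⁻¹ • stereoProj s

open Classical in
/-- The map `h₁(x) = arccos((1 - ‖x‖²)/(1 + ‖x‖²)) • x/‖x‖` for `x ≠ 0`, `h₁(0) = 0`. -/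
def h1 {d : ℕ} (x : EuclideanSpace ℝ (Fin d)) : EuclideanSpace ℝ (Fin d) :=
  if x = 0 then 0 else Real.arccos ((1 - ‖x‖ ^ 2) / (1 + ‖x‖ ^ 2)) • ‖x‖⁻¹ • x

/-- The north pole `s_n = (0, …, 0, 1)` of `𝕊^d ⊂ ℝ^{d+1}`. -/
def northPole (d : ℕ) : EuclideanSpace ℝ (Fin (d + 1)) :=
  EuclideanSpace.single (Fin.last d) 1

/-- The south pole `s₀ = (0, …, 0, -1)` of `𝕊^d ⊂ ℝ^{d+1}`. -/
def southPole (d : ℕ) : EuclideanSpace ℝ (Fin (d + 1)) :=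
  EuclideanSpace.single (Fin.last d) (-1)

end

/-- The action of a matrix on a point of `ℝ^{d+1}` by matrix–vector multiplication. -/
noncomputable def matAct {d : ℕ} (R : Matrix (Fin (d + 1)) (Fin (d + 1)) ℝ)
    (s : EuclideanSpace ℝ (Fin (d + 1))) : EuclideanSpace ℝ (Fin (d + 1)) :=
  WithLp.toLp 2 (R.mulVec s)

section Rotation

open Module

variable {E : Type*} [NormedAddCommGroup E] [InnerProductSpace ℝ E] [FiniteDimensional ℝ E]

lemma exists_ne_zero_inner_eq_zero (hE : 2 ≤ finrank ℝ E) (v : E) :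
    ∃ w : E, w ≠ 0 ∧ ⟪v, w⟫ = 0 := by
  have hrank : finrank ℝ (ℝ ∙ v) + finrank ℝ (ℝ ∙ v)ᗮ = finrank ℝ E :=
    Submodule.finrank_add_finrank_orthogonal _
  have hspan : finrank ℝ (ℝ ∙ v) ≤ 1 := by simpa using finrank_span_le_card ({v} : Set E)
  obtain ⟨w, hw, hw0⟩ := Submodule.exists_mem_ne_zero_of_ne_bot
    (Submodule.one_le_finrank_iff.mp (by omega) : (ℝ ∙ v)ᗮ ≠ ⊥)
  exact ⟨w, hw0, Submodule.mem_orthogonal_singleton_iff_inner_right.mp hw⟩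

lemma exists_linearIsometryEquiv_det_eq_neg_one_apply_self (hE : 2 ≤ finrank ℝ E) (v : E) :
    ∃ σ : E ≃ₗᵢ[ℝ] E, LinearMap.det σ.toLinearMap = -1 ∧ σ v = v := by
  obtain ⟨w, hw0, hvw⟩ := exists_ne_zero_inner_eq_zero hE v
  refine ⟨(ℝ ∙ w)ᗮ.reflection, ?_, ?_⟩
  · rw [Submodule.det_reflection, Submodule.orthogonal_orthogonal, finrank_span_singleton hw0,
      pow_one]
  · exact Submodule.reflection_mem_subspace_eq_self
      (Submodule.mem_orthogonal_singleton_iff_inner_left.mpr hvw)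

theorem exists_linearIsometryEquiv_det_eq_one_apply_eq (hE : 2 ≤ finrank ℝ E) {u v : E}
    (h : ‖u‖ = ‖v‖) : ∃ f : E ≃ₗᵢ[ℝ] E, LinearMap.det f.toLinearMap = 1 ∧ f u = v := by
  set ρ := (ℝ ∙ (u - v))ᗮ.reflection
  have hρ : ρ u = v := Submodule.reflection_sub h
  rcases neg_one_pow_eq_or ℝ (finrank ℝ (ℝ ∙ (u - v))ᗮᗮ) with hdet | hdet
  · exact ⟨ρ, by rw [Submodule.det_reflection, hdet], hρ⟩
  · obtain ⟨σ, hσdet, hσv⟩ := exists_linearIsometryEquiv_det_eq_neg_one_apply_self hE v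
    refine ⟨ρ.trans σ, ?_, by simp [hρ, hσv]⟩
    rw [LinearIsometryEquiv.toLinearEquiv_trans, LinearEquiv.coe_trans, LinearMap.det_comp,
      hσdet, Submodule.det_reflection, hdet]
    norm_num

end Rotation

lemma LinearIsometryEquiv.exists_mem_orthogonalGroup_toEuclideanLin_eq {ι : Type*} [Fintype ι]
    [DecidableEq ι] (f : EuclideanSpace ℝ ι ≃ₗᵢ[ℝ] EuclideanSpace ℝ ι) :
    ∃ R ∈ Matrix.orthogonalGroup ι ℝ, R.det = LinearMap.det f.toLinearMap ∧
      Matrix.toEuclideanLin R = f.toLinearMap := by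
  set b := (EuclideanSpace.basisFun ι ℝ).toBasis
  refine ⟨LinearMap.toMatrix b b f.toLinearMap, f.toMatrix_mem_unitaryGroup _ _,
    LinearMap.det_toMatrix b _, ?_⟩
  rw [Matrix.toEuclideanLin_eq_toLin_orthonormal, Matrix.toLin_toMatrix]

lemma h1_zero {d : ℕ} : h1 (0 : EuclideanSpace ℝ (Fin d)) = 0 := by
  simp [h1]

lemma h1_neg {d : ℕ} (x : EuclideanSpace ℝ (Fin d)) : h1 (-x) = -h1 x := by
  by_cases hx : x = 0
  · simp [hx, h1]
  · simp [h1, hx]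

lemma norm_h1 {d : ℕ} (x : EuclideanSpace ℝ (Fin d)) :
    ‖h1 x‖ = arccos ((1 - ‖x‖ ^ 2) / (1 + ‖x‖ ^ 2)) := by
  by_cases hx : x = 0
  · simp [hx, h1]
  · rw [h1, if_neg hx, norm_smul, norm_smul, norm_inv, norm_norm, Real.norm_eq_abs,
      abs_of_nonneg (arccos_nonneg _), inv_mul_cancel₀ (norm_ne_zero_iff.mpr hx), mul_one]

lemma norm_sq_eq_norm_stereoProj_sq_add {d : ℕ} (t : EuclideanSpace ℝ (Fin (d + 1))) :
    ‖t‖ ^ 2 = ‖stereoProj t‖ ^ 2 + t (Fin.last d) ^ 2 := by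
  simp [EuclideanSpace.norm_sq_eq, stereoProj, Fin.sum_univ_castSucc]

lemma norm_stereo_sq {d : ℕ} {t : EuclideanSpace ℝ (Fin (d + 1))} (ht : ‖t‖ = 1)
    (hL : t (Fin.last d) ≠ 1) :
    ‖stereo t‖ ^ 2 = (1 + t (Fin.last d)) / (1 - t (Fin.last d)) := by
  have hproj : ‖stereoProj t‖ ^ 2 = 1 - t (Fin.last d) ^ 2 := by
    have := norm_sq_eq_norm_stereoProj_sq_add t
    rw [ht, one_pow] at this
    linarith
  have hL' : 1 - t (Fin.last d) ≠ 0 := sub_ne_zero.mpr (Ne.symm hL)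
  rw [stereo, norm_smul, mul_pow, hproj, norm_inv, Real.norm_eq_abs, inv_pow, sq_abs]
  field_simp
  ring

lemma norm_h1_stereo {d : ℕ} {t : EuclideanSpace ℝ (Fin (d + 1))} (ht : ‖t‖ = 1)
    (hL : t (Fin.last d) ≠ 1) : ‖h1 (stereo t)‖ = arccos (-t (Fin.last d)) := by
  have hL' : 1 - t (Fin.last d) ≠ 0 := sub_ne_zero.mpr (Ne.symm hL)
  rw [norm_h1, norm_stereo_sq ht hL]
  congr 1
  field_simp
  ring

lemma last_ne_one_of_ne_northPole {d : ℕ} {t : EuclideanSpace ℝ (Fin (d + 1))} (ht : ‖t‖ = 1)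
    (hN : t ≠ northPole d) : t (Fin.last d) ≠ 1 := by
  intro hL
  have hinner : ⟪northPole d, t⟫ = 1 := by simp [northPole, EuclideanSpace.inner_single_left, hL]
  have : ‖northPole d - t‖ ^ 2 = 0 := by
    rw [norm_sub_sq_real, hinner, ht]
    norm_num [northPole]
  exact hN (sub_eq_zero.mp (norm_eq_zero.mp (pow_eq_zero_iff two_ne_zero |>.mp this))).symm

lemma ne_northPole_of_last_ne_one {d : ℕ} {t : EuclideanSpace ℝ (Fin (d + 1))}
    (hL : t (Fin.last d) ≠ 1) : t ≠ northPole d := by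
  rintro rfl
  simp [northPole] at hL

lemma northPole_eq_neg_southPole (d : ℕ) : northPole d = -southPole d := by
  simp [northPole, southPole, EuclideanSpace.single, PiLp.single_neg]

lemma stereo_southPole (d : ℕ) : stereo (southPole d) = 0 := by
  ext i
  simp [stereo, stereoProj, southPole]

lemma stereo_neg_of_last_eq_zero {d : ℕ} {t : EuclideanSpace ℝ (Fin (d + 1))}
    (hL : t (Fin.last d) = 0) : stereo (-t) = -stereo t := by
  ext i
  simp [stereo, stereoProj, hL]

lemma arccos_inner_southPole_eq_norm_h1_stereo_sub {d : ℕ} {t : EuclideanSpace ℝ (Fin (d + 1))}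
    (ht : ‖t‖ = 1) (hN : t ≠ northPole d) :
    arccos ⟪southPole d, t⟫ = ‖h1 (stereo (southPole d)) - h1 (stereo t)‖ := by
  rw [stereo_southPole, h1_zero, zero_sub, norm_neg,
    norm_h1_stereo ht (last_ne_one_of_ne_northPole ht hN)]
  simp [southPole, EuclideanSpace.inner_single_left]

lemma arccos_inner_neg_eq_norm_h1_stereo_sub {d : ℕ} {t : EuclideanSpace ℝ (Fin (d + 1))}
    (ht : ‖t‖ = 1) (hL : t (Fin.last d) = 0) :
    arccos ⟪t, -t⟫ = ‖h1 (stereo t) - h1 (stereo (-t))‖ := by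
  have hnorm := norm_h1_stereo ht (by rw [hL]; exact zero_ne_one)
  rw [stereo_neg_of_last_eq_zero hL, h1_neg, sub_neg_eq_add, ← two_smul ℝ, norm_smul, hnorm, hL,
    inner_neg_right, real_inner_self_eq_norm_sq, ht]
  norm_num
  ring

theorem exists_linearIsometryEquiv_arccos_inner_eq {d : ℕ} (hd : 1 ≤ d)
    {s₁ s₂ : EuclideanSpace ℝ (Fin (d + 1))} (hs₁ : ‖s₁‖ = 1) (hs₂ : ‖s₂‖ = 1) :
    ∃ f : EuclideanSpace ℝ (Fin (d + 1)) ≃ₗᵢ[ℝ] EuclideanSpace ℝ (Fin (d + 1)),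
      LinearMap.det f.toLinearMap = 1 ∧ f s₁ ≠ northPole d ∧ f s₂ ≠ northPole d ∧
      arccos ⟪s₁, s₂⟫ = ‖h1 (stereo (f s₁)) - h1 (stereo (f s₂))‖ := by
  have hrank : 2 ≤ Module.finrank ℝ (EuclideanSpace ℝ (Fin (d + 1))) := by
    rw [finrank_euclideanSpace_fin]; omega
  by_cases hanti : s₂ = -s₁
  · set e : EuclideanSpace ℝ (Fin (d + 1)) := EuclideanSpace.single 0 1
    have he : e (Fin.last d) = 0 := by
      rw [PiLp.single_apply, if_neg (by rw [Fin.ext_iff, Fin.val_last, Fin.val_zero]; omega)]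
    obtain ⟨f, hdet, hf⟩ :=
      exists_linearIsometryEquiv_det_eq_one_apply_eq hrank (show ‖s₁‖ = ‖e‖ by simp [e, hs₁])
    have hf₂ : f s₂ = -e := by rw [hanti, map_neg, hf]
    refine ⟨f, hdet, ?_, ?_, ?_⟩
    · rw [hf]; exact ne_northPole_of_last_ne_one (by simp [he])
    · rw [hf₂]; exact ne_northPole_of_last_ne_one (by simp [he])
    · rw [← f.inner_map_map, hf, hf₂]
      exact arccos_inner_neg_eq_norm_h1_stereo_sub (by simp [e]) he
  · obtain ⟨f, hdet, hf⟩ := exists_linearIsometryEquiv_det_eq_one_apply_eq hrank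
      (show ‖s₁‖ = ‖southPole d‖ by simp [southPole, hs₁])
    have hN₂ : f s₂ ≠ northPole d := by
      rw [northPole_eq_neg_southPole, ← hf, ← map_neg]
      exact fun h => hanti (f.injective h)
    refine ⟨f, hdet, ?_, hN₂, ?_⟩
    · rw [hf]; exact ne_northPole_of_last_ne_one (by norm_num [southPole])
    · rw [← f.inner_map_map, hf]
      exact arccos_inner_southPole_eq_norm_h1_stereo_sub (by rw [f.norm_map, hs₂]) hN₂

/-- for `s₁, s₂ ∈ 𝕊^d` there is an orthogonal matrix `R` with `det R = 1`,
`R s₁ ≠ s_n`, `R s₂ ≠ s_n`, and `arccos ⟨s₁, s₂⟩ = ‖h₁(φ(R s₁)) - h₁(φ(R s₂))‖`; in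
particular `arccos ⟨s₁, s₂⟩` is at least the infimum of these quantities over all
orthogonal matrices `R` with `R s₁ ≠ s_n` and `R s₂ ≠ s_n`. -/
theorem stmt4 {d : ℕ} (hd : 1 ≤ d) (s₁ s₂ : EuclideanSpace ℝ (Fin (d + 1)))
    (hs₁ : ‖s₁‖ = 1) (hs₂ : ‖s₂‖ = 1) :
    (∃ R : Matrix (Fin (d + 1)) (Fin (d + 1)) ℝ,
      R ∈ Matrix.orthogonalGroup (Fin (d + 1)) ℝ ∧ R.det = 1 ∧
      matAct R s₁ ≠ northPole d ∧ matAct R s₂ ≠ northPole d ∧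
      Real.arccos ⟪s₁, s₂⟫ = ‖h1 (stereo (matAct R s₁)) - h1 (stereo (matAct R s₂))‖) ∧
    sInf {r : ℝ | ∃ R : Matrix (Fin (d + 1)) (Fin (d + 1)) ℝ,
        R ∈ Matrix.orthogonalGroup (Fin (d + 1)) ℝ ∧
        matAct R s₁ ≠ northPole d ∧ matAct R s₂ ≠ northPole d ∧
        r = ‖h1 (stereo (matAct R s₁)) - h1 (stereo (matAct R s₂))‖} ≤
      Real.arccos ⟪s₁, s₂⟫ := by
  obtain ⟨f, hdet, hN₁, hN₂, heq⟩ := exists_linearIsometryEquiv_arccos_inner_eq hd hs₁ hs₂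
  obtain ⟨R, hR, hRdet, hRf⟩ := f.exists_mem_orthogonalGroup_toEuclideanLin_eq
  have hact (s : EuclideanSpace ℝ (Fin (d + 1))) : matAct R s = f s := LinearMap.congr_fun hRf s
  simp only [← hact] at hN₁ hN₂ heq
  refine ⟨⟨R, hR, hRdet.trans hdet, hN₁, hN₂, heq⟩, csInf_le ⟨0, ?_⟩ ⟨R, hR, hN₁, hN₂, heq⟩⟩
  rintro r ⟨_, -, -, -, rfl⟩
  positivity
end

section
/- Let d ≥ 1 and let s₁, s₂ be points of the unit sphere 𝕊^d ⊂ ℝ^{d+1} at the same latitude, i.e. (s₁)_{d+1} = (s₂)_{d+1} < 1. Then arccos(⟨s₁, s₂⟩) ≤ ‖h₁(φ(s₁)) − h₁(φ(s₂))‖ and arccos(⟨s₁, s₂⟩) ≤ 2π − ‖h₁(φ(s₁)) − h₁(φ(s₂))‖; that is, arccos(⟨s₁, s₂⟩) ≤ min( ‖h₁(φ(s₁)) − h₁(φ(s₂))‖ , 2π − ‖h₁(φ(s₁)) − h₁(φ(s₂))‖ ). -/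
open Real
open scoped RealInnerProductSpace

/-!
Write `u = s[1:d]` and `t = s_{d+1}`. For `‖s‖ = 1`, `h₁ (φ s) = (ρ / sin ρ) • u`, where
`ρ = arccos (-t)` is the angular distance from `s` to the south pole and `‖u‖ = sin ρ`. For two
points at the same latitude, with chord `c = ‖u₁ - u₂‖ ≤ 2 sin ρ`, the distance of the images is
`D = ρ c / sin ρ ∈ [0, 2π]`, while `⟨s₁, s₂⟩ = 1 - c² / 2`. Concavity of `sin` on `[0, π]` gives
`sin (a ρ) ≥ a sin ρ` for `a = c / (2 sin ρ)`, hence `cos D ≤ 1 - c² / 2 = ⟨s₁, s₂⟩`; as `arccos` is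
antitone, `arccos ⟨s₁, s₂⟩ ≤ arccos (cos D) = min D (2π - D)`.
-/

namespace Real

theorem mul_sin_le_sin_mul {a x : ℝ} (ha₀ : 0 ≤ a) (ha₁ : a ≤ 1) (hx₀ : 0 ≤ x) (hxπ : x ≤ π) :
    a * sin x ≤ sin (a * x) := by
  simpa using strictConcaveOn_sin_Icc.concaveOn.2 ⟨le_rfl, pi_pos.le⟩ ⟨hx₀, hxπ⟩
    (sub_nonneg.2 ha₁) ha₀ (sub_add_cancel 1 a)

theorem cos_div_sin_mul_le {ρ c : ℝ} (hρ₀ : 0 ≤ ρ) (hρπ : ρ ≤ π) (hc₀ : 0 ≤ c)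
    (hc : c ≤ 2 * sin ρ) : cos (ρ / sin ρ * c) ≤ 1 - c ^ 2 / 2 := by
  obtain hsin | hsin := (sin_nonneg_of_nonneg_of_le_pi hρ₀ hρπ).eq_or_lt
  · obtain rfl : c = 0 := by linarith
    simp
  set a := c / (2 * sin ρ) with ha
  have ha₁ : a ≤ 1 := (div_le_one (by positivity)).2 hc
  have hchord : c / 2 ≤ sin (a * ρ) := by
    calc c / 2 = a * sin ρ := by rw [ha]; field_simp
      _ ≤ sin (a * ρ) := mul_sin_le_sin_mul (by positivity) ha₁ hρ₀ hρπ
  calc cos (ρ / sin ρ * c) = 1 - 2 * sin (a * ρ) ^ 2 := by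
        rw [show ρ / sin ρ * c = 2 * (a * ρ) by rw [ha]; field_simp, cos_two_mul, cos_sq']
        ring
    _ ≤ 1 - 2 * (c / 2) ^ 2 := by gcongr
    _ = 1 - c ^ 2 / 2 := by ring

theorem div_sin_mul_le_two_mul {ρ c : ℝ} (hρ₀ : 0 ≤ ρ) (hc₀ : 0 ≤ c)
    (hc : c ≤ 2 * sin ρ) : ρ / sin ρ * c ≤ 2 * ρ := by
  obtain hsin | hsin := (show 0 ≤ sin ρ by linarith).eq_or_lt
  · obtain rfl : c = 0 := by linarith
    simpa using hρ₀
  calc ρ / sin ρ * c ≤ ρ / sin ρ * (2 * sin ρ) := by gcongr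
    _ = 2 * ρ := by field_simp

theorem arccos_le_of_cos_le {x D : ℝ} (hD : 0 ≤ D) (h : cos D ≤ x) : arccos x ≤ D := by
  obtain hDπ | hπD := le_or_gt D π
  · calc arccos x ≤ arccos (cos D) := arccos_le_arccos h
      _ = D := arccos_cos hD hDπ
  · exact (arccos_le_pi x).trans hπD.le

end Real

theorem inner_eq_inner_stereoProj_add {d : ℕ} (s s' : EuclideanSpace ℝ (Fin (d + 1))) :
    ⟪s, s'⟫ = ⟪stereoProj s, stereoProj s'⟫ + s (Fin.last d) * s' (Fin.last d) := by
  simp [PiLp.inner_apply, stereoProj, Fin.sum_univ_castSucc, mul_comm]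

theorem norm_stereoProj_sq {d : ℕ} (s : EuclideanSpace ℝ (Fin (d + 1))) :
    ‖stereoProj s‖ ^ 2 = ‖s‖ ^ 2 - s (Fin.last d) ^ 2 := by
  rw [← real_inner_self_eq_norm_sq, ← real_inner_self_eq_norm_sq, inner_eq_inner_stereoProj_add]
  ring

theorem norm_stereoProj_eq_sin_arccos {d : ℕ} {s : EuclideanSpace ℝ (Fin (d + 1))}
    (hs : ‖s‖ = 1) : ‖stereoProj s‖ = sin (arccos (-s (Fin.last d))) := by
  rw [sin_arccos, neg_sq, ← one_pow 2, ← hs, ← norm_stereoProj_sq, sqrt_sq (norm_nonneg _)]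

theorem h1_eq_smul {d : ℕ} (x : EuclideanSpace ℝ (Fin d)) :
    h1 x = (arccos ((1 - ‖x‖ ^ 2) / (1 + ‖x‖ ^ 2)) / ‖x‖) • x := by
  by_cases hx : x = 0
  · simp [h1, hx]
  · simp only [h1, if_neg hx, smul_smul, div_eq_mul_inv]

theorem h1_stereo_eq_smul {d : ℕ} {s : EuclideanSpace ℝ (Fin (d + 1))} (hs : ‖s‖ = 1) :
    h1 (stereo s) = (arccos (-s (Fin.last d)) / ‖stereoProj s‖) • stereoProj s := by
  set t := s (Fin.last d)
  set u := stereoProj s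
  have hstereo : stereo s = (1 - t)⁻¹ • u := rfl
  have hu : ‖u‖ ^ 2 = 1 - t ^ 2 := by rw [norm_stereoProj_sq, hs, one_pow]
  -- at either pole `u = 0`, and both sides vanish
  by_cases hu₀ : u = 0
  · simp [h1, hstereo, hu₀]
  have ht : t ^ 2 < 1 := by
    have := norm_pos_iff.2 hu₀
    nlinarith
  have h1t : 0 < 1 - t := by nlinarith
  have hnorm : ‖stereo s‖ = ‖u‖ / (1 - t) := by
    rw [hstereo, norm_smul, norm_inv, norm_of_nonneg h1t.le, inv_mul_eq_div]
  have hsq : ‖stereo s‖ ^ 2 = (1 + t) / (1 - t) := by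
    rw [hnorm, div_pow, hu]
    field_simp
    ring
  have harg : (1 - ‖stereo s‖ ^ 2) / (1 + ‖stereo s‖ ^ 2) = -t := by
    rw [hsq]
    field_simp
    ring
  rw [h1_eq_smul, harg, hnorm, hstereo, smul_smul]
  congr 1
  field_simp

theorem stmt5_general {d : ℕ} (s₁ s₂ : EuclideanSpace ℝ (Fin (d + 1)))
    (hs₁ : ‖s₁‖ = 1) (hs₂ : ‖s₂‖ = 1)
    (hlat : s₁ (Fin.last d) = s₂ (Fin.last d)) :
    Real.arccos ⟪s₁, s₂⟫ ≤ ‖h1 (stereo s₁) - h1 (stereo s₂)‖ ∧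
      Real.arccos ⟪s₁, s₂⟫ ≤ 2 * π - ‖h1 (stereo s₁) - h1 (stereo s₂)‖ ∧
      Real.arccos ⟪s₁, s₂⟫ ≤
        min (‖h1 (stereo s₁) - h1 (stereo s₂)‖) (2 * π - ‖h1 (stereo s₁) - h1 (stereo s₂)‖) := by
  set t := s₁ (Fin.last d)
  set ρ := arccos (-t)
  set c := ‖stereoProj s₁ - stereoProj s₂‖
  have hρ₀ : 0 ≤ ρ := arccos_nonneg _
  have hr₁ : ‖stereoProj s₁‖ = sin ρ := norm_stereoProj_eq_sin_arccos hs₁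
  have hr₂ : ‖stereoProj s₂‖ = sin ρ := by rw [norm_stereoProj_eq_sin_arccos hs₂, ← hlat]
  have hsin₀ : 0 ≤ sin ρ := hr₁ ▸ norm_nonneg _
  have hc : c ≤ 2 * sin ρ := by
    linarith [norm_sub_le (stereoProj s₁) (stereoProj s₂)]
  have hdist : ‖h1 (stereo s₁) - h1 (stereo s₂)‖ = ρ / sin ρ * c := by
    rw [h1_stereo_eq_smul hs₁, h1_stereo_eq_smul hs₂, hr₁, hr₂, ← hlat, ← smul_sub, norm_smul,
      norm_of_nonneg (div_nonneg hρ₀ hsin₀)]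
  have hinner : ⟪s₁, s₂⟫ = 1 - c ^ 2 / 2 := by
    have hsq := norm_stereoProj_sq s₁
    rw [hr₁, hs₁] at hsq
    rw [inner_eq_inner_stereoProj_add, ← hlat, norm_sub_sq_real, hr₁, hr₂]
    linear_combination hsq
  have hcos : cos (ρ / sin ρ * c) ≤ ⟪s₁, s₂⟫ :=
    hinner ▸ cos_div_sin_mul_le hρ₀ (arccos_le_pi _) (norm_nonneg _) hc
  have hle : ρ / sin ρ * c ≤ 2 * π :=
    (div_sin_mul_le_two_mul hρ₀ (norm_nonneg _) hc).trans (by linarith [arccos_le_pi (-t)])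
  rw [hdist]
  have hleD := arccos_le_of_cos_le (by positivity) hcos
  have hle2πD := arccos_le_of_cos_le (x := ⟪s₁, s₂⟫) (sub_nonneg.2 hle) (by rwa [cos_two_pi_sub])
  exact ⟨hleD, hle2πD, le_min hleD hle2πD⟩

/-- for `s₁, s₂ ∈ 𝕊^d` at the same latitude `(s₁)_{d+1} = (s₂)_{d+1} < 1`,
`arccos ⟨s₁, s₂⟩ ≤ min(‖h₁(φ(s₁)) - h₁(φ(s₂))‖, 2π - ‖h₁(φ(s₁)) - h₁(φ(s₂))‖)`. -/
theorem stmt5 {d : ℕ} (hd : 1 ≤ d) (s₁ s₂ : EuclideanSpace ℝ (Fin (d + 1)))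
    (hs₁ : ‖s₁‖ = 1) (hs₂ : ‖s₂‖ = 1)
    (hlat : s₁ (Fin.last d) = s₂ (Fin.last d)) (hlt : s₁ (Fin.last d) < 1) :
    Real.arccos ⟪s₁, s₂⟫ ≤ ‖h1 (stereo s₁) - h1 (stereo s₂)‖ ∧
      Real.arccos ⟪s₁, s₂⟫ ≤ 2 * π - ‖h1 (stereo s₁) - h1 (stereo s₂)‖ ∧
      Real.arccos ⟪s₁, s₂⟫ ≤
        min (‖h1 (stereo s₁) - h1 (stereo s₂)‖) (2 * π - ‖h1 (stereo s₁) - h1 (stereo s₂)‖) :=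
  stmt5_general s₁ s₂ hs₁ hs₂ hlat
end
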